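/- arXiv:1709.07362 — 2 statements merged into one kernel-verified Lean document; each statement's English description precedes it below -/
import Mathlib

section
/- Let α ∈ (1,2) and τ > 0. Then ∫₀^τ x^{2-α}/(1+x²) dx - ∫_τ^∞ x^{-α}/(1+x²) dx = -π/(2 cos(πα/2)) - τ^{1-α}/(α-1). -/
/-! Substituting `t = y / (1 + y)` in Euler's Beta integral `B(s, 1 - s) = Γ(s) Γ(1 - s) = π / sin(πs)`
gives `∫₀^∞ y^(s-1) / (1 + y) dy = π / sin(πs)`, and `y = x²` with `s = (3 - α) / 2` turns this
into `∫₀^∞ x^(2-α) / (1 + x²) dx = -π / (2 cos(πα/2))`. Split this integral at `τ` and use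
`x^(2-α) / (1 + x²) = x^(-α) - x^(-α) / (1 + x²)` together with `∫_τ^∞ x^(-α) dx = τ^(1-α) / (α - 1)`.
-/

open MeasureTheory Real Set

theorem integral_Ioo_rpow_mul_one_sub_rpow_neg {s : ℝ} (hs0 : 0 < s) (hs1 : s < 1) :
    ∫ t in Ioo (0 : ℝ) 1, t ^ (s - 1) * (1 - t) ^ (-s) = π / sin (π * s) := by
  have hβ : Complex.betaIntegral s ((1 - s : ℝ) : ℂ) =
      ((∫ t in (0 : ℝ)..1, t ^ (s - 1) * (1 - t) ^ (-s) : ℝ) : ℂ) := by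
    rw [Complex.betaIntegral, ← intervalIntegral.integral_ofReal, Complex.ofReal_sub,
      Complex.ofReal_one]
    refine intervalIntegral.integral_congr fun t ht => ?_
    rw [uIcc_of_le zero_le_one] at ht
    push_cast [Complex.ofReal_cpow ht.1, Complex.ofReal_cpow (sub_nonneg.2 ht.2)]
    ring_nf
  have h := ProbabilityTheory.beta_eq_betaIntegralReal s (1 - s) hs0 (sub_pos.2 hs1)
  rw [ProbabilityTheory.beta, add_sub_cancel, Real.Gamma_one, div_one,
    Real.Gamma_mul_Gamma_one_sub, hβ, Complex.ofReal_re,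
    intervalIntegral.integral_of_le zero_le_one, integral_Ioc_eq_integral_Ioo] at h
  exact h.symm

theorem image_div_one_add_Ioi_zero : (fun y : ℝ => y / (1 + y)) '' Ioi 0 = Ioo 0 1 := by
  ext t
  constructor
  · rintro ⟨y, hy : 0 < y, rfl⟩
    exact ⟨by positivity, (div_lt_one (by positivity)).2 (by linarith)⟩
  · rintro ⟨ht0, ht1⟩
    have h1t : 0 < 1 - t := sub_pos.2 ht1
    refine ⟨t / (1 - t), div_pos ht0 h1t, ?_⟩
    field_simp
    ring

theorem integral_Ioi_rpow_div_one_add {s : ℝ} (hs0 : 0 < s) (hs1 : s < 1) :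
    ∫ y in Ioi (0 : ℝ), y ^ (s - 1) / (1 + y) = π / sin (π * s) := by
  rw [← integral_Ioo_rpow_mul_one_sub_rpow_neg hs0 hs1, ← image_div_one_add_Ioi_zero,
    integral_image_eq_integral_abs_deriv_smul measurableSet_Ioi
      (f' := fun y => 1 / (1 + y) ^ 2) ?deriv ?inj]
  case deriv =>
    intro y (hy : 0 < y)
    have h1y : 1 + y ≠ 0 := by positivity
    exact ((hasDerivAt_id' y).fun_div ((hasDerivAt_id' y).const_add 1) h1y).hasDerivWithinAt
      |>.congr_deriv (by ring)
  case inj =>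
    intro a (ha : 0 < a) b (hb : 0 < b) h
    field_simp at h
    linarith
  refine setIntegral_congr_fun measurableSet_Ioi fun y (hy : 0 < y) => ?_
  have h1y : 0 < 1 + y := by positivity
  have hpow : (1 + y) ^ s = (1 + y) ^ (s - 1) * (1 + y) := by
    rw [← rpow_add_one h1y.ne']; ring_nf
  have : 0 < (1 + y) ^ (s - 1) := rpow_pos_of_pos h1y _
  rw [smul_eq_mul, abs_of_pos (by positivity), one_sub_div h1y.ne', add_sub_cancel_right,
    div_rpow hy.le h1y.le, div_rpow zero_le_one h1y.le, one_rpow, rpow_neg h1y.le, hpow]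
  field_simp

theorem integral_Ioi_rpow_div_one_add_sq {s : ℝ} (hs0 : 0 < s) (hs1 : s < 1) :
    ∫ x in Ioi (0 : ℝ), x ^ (2 * s - 1) / (1 + x ^ 2) = π / (2 * sin (π * s)) := by
  have h := integral_comp_rpow_Ioi_of_pos (g := fun y : ℝ => y ^ (s - 1) / (1 + y)) two_pos
  rw [integral_Ioi_rpow_div_one_add hs0 hs1] at h
  calc ∫ x in Ioi (0 : ℝ), x ^ (2 * s - 1) / (1 + x ^ 2)
      = 2⁻¹ * ∫ x in Ioi (0 : ℝ),
          (2 * x ^ ((2 : ℝ) - 1)) • ((x ^ (2 : ℝ)) ^ (s - 1) / (1 + x ^ (2 : ℝ))) := by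
        rw [← integral_const_mul]
        refine setIntegral_congr_fun measurableSet_Ioi fun x (hx : 0 < x) => ?_
        have hsplit : x ^ (2 * s - 1) = x ^ ((2 : ℝ) * (s - 1)) * x ^ ((2 : ℝ) - 1) := by
          rw [← rpow_add hx]; ring_nf
        rw [smul_eq_mul, ← rpow_mul hx.le, rpow_two, hsplit]
        ring
    _ = π / (2 * sin (π * s)) := by rw [h]; ring

theorem cos_pi_mul_div_two_eq_neg_sin {α : ℝ} :
    cos (π * α / 2) = -sin (π * ((3 - α) / 2)) := by
  rw [show π * ((3 - α) / 2) = π / 2 - π * α / 2 + π by ring, sin_add_pi, sin_pi_div_two_sub,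
    neg_neg]

theorem cos_pi_mul_div_two_neg {α : ℝ} (hα1 : 1 < α) (hα3 : α < 3) : cos (π * α / 2) < 0 := by
  rw [cos_pi_mul_div_two_eq_neg_sin, neg_lt_zero]
  exact sin_pos_of_pos_of_lt_pi (by nlinarith [pi_pos]) (by nlinarith [pi_pos])

theorem integral_Ioi_rpow_two_sub_div_one_add_sq {α : ℝ} (hα1 : 1 < α) (hα3 : α < 3) :
    ∫ x in Ioi (0 : ℝ), x ^ (2 - α) / (1 + x ^ 2) = -π / (2 * cos (π * α / 2)) := by
  have h := integral_Ioi_rpow_div_one_add_sq (s := (3 - α) / 2) (by linarith) (by linarith)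
  rw [show 2 * ((3 - α) / 2) - 1 = 2 - α by ring] at h
  rw [h, cos_pi_mul_div_two_eq_neg_sin]
  ring

theorem stmt2 (α τ : ℝ) (hα1 : 1 < α) (hα2 : α < 2) (hτ : 0 < τ) :
    (∫ x in Set.Ioc (0 : ℝ) τ, x ^ (2 - α) / (1 + x ^ 2)) -
        ∫ x in Set.Ioi τ, x ^ (-α) / (1 + x ^ 2) =
      -π / (2 * Real.cos (π * α / 2)) - τ ^ (1 - α) / (α - 1) := by
  have hval := integral_Ioi_rpow_two_sub_div_one_add_sq hα1 (by linarith : α < 3)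
  -- a non-integrable function would have integral `0`
  have hint : IntegrableOn (fun x : ℝ => x ^ (2 - α) / (1 + x ^ 2)) (Ioi 0) :=
    Integrable.of_integral_ne_zero (by
      rw [hval]
      exact div_ne_zero (neg_ne_zero.2 pi_ne_zero)
        (mul_neg_of_pos_of_neg two_pos (cos_pi_mul_div_two_neg hα1 (by linarith))).ne)
  have hsplit : ∫ x in Ioi (0 : ℝ), x ^ (2 - α) / (1 + x ^ 2) =
      (∫ x in Ioc (0 : ℝ) τ, x ^ (2 - α) / (1 + x ^ 2)) +
        ∫ x in Ioi τ, x ^ (2 - α) / (1 + x ^ 2) := by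
    rw [← setIntegral_union (Ioc_disjoint_Ioi le_rfl) measurableSet_Ioi
      (hint.mono_set Ioc_subset_Ioi_self) (hint.mono_set (Ioi_subset_Ioi hτ.le)),
      Ioc_union_Ioi_eq_Ioi hτ.le]
  have htail : ∫ x in Ioi τ, x ^ (-α) / (1 + x ^ 2) =
      (∫ x in Ioi τ, x ^ (-α)) - ∫ x in Ioi τ, x ^ (2 - α) / (1 + x ^ 2) := by
    rw [← integral_sub (integrableOn_Ioi_rpow_of_lt (by linarith) hτ)
      (hint.mono_set (Ioi_subset_Ioi hτ.le))]
    refine setIntegral_congr_fun measurableSet_Ioi fun x (hx : τ < x) => ?_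
    have hx0 : 0 < x := hτ.trans hx
    rw [sub_eq_add_neg 2 α, rpow_add hx0, rpow_two]
    field_simp
    ring
  have hpow : ∫ x in Ioi τ, x ^ (-α) = τ ^ (1 - α) / (α - 1) := by
    rw [integral_Ioi_rpow_of_lt (by linarith) hτ, neg_add_eq_sub, neg_div, ← div_neg,
      neg_sub]
  rw [← hval, hsplit, htail, hpow]
  ring
end

section
/- Let α ∈ (1,2). For every t ∈ ℝ, t ≠ 0, the integral ∫₀^∞ (e^{itx} - 1 - itx) x^{-α-1} dx converges and equals (Γ(2-α)/(α(α-1))) |t|^α (cos(πα/2) - i sin(πα/2) sign(t)). -/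
/-!
Put `Φ(a) = ∫₀^∞ (e^{-ax} - 1 + ax) x^{-α-1} dx` for `Re a ≥ 0`; the integral of the theorem is
`Φ(-it)`. The integrand is `O(x^{1-α})` near `0` and `O(x^{-α})` near `∞`, locally uniformly in
`a`, so `Φ` is continuous on the closed right half-plane and holomorphic on the open one, where
`Φ''(a) = ∫₀^∞ e^{-ax} x^{1-α} dx`. The substitution `x ↦ x / r` gives `Φ(r) = r^α Φ(1)` for
`r > 0`; differentiating twice at `r = 1` gives `α(α-1) Φ(1) = Φ''(1) = Γ(2-α)`. So
`Φ(a) = Γ(2-α) / (α(α-1)) · a^α` on the positive reals, hence on the open half-plane by the identity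
theorem and on its closure by continuity. Finally `(-it)^α = |t|^α e^{-iπα sign(t)/2}`.
-/

open MeasureTheory Real Complex

open Set Filter Topology

theorem integrableOn_Ioi_min_rpow {p q : ℝ} (hp : -1 < p) (hq : q < -1) :
    IntegrableOn (fun x : ℝ => min (x ^ p) (x ^ q)) (Ioi 0) := by
  have hmeas : AEStronglyMeasurable (fun x : ℝ => min (x ^ p) (x ^ q)) := by fun_prop
  rw [← Ioc_union_Ioi_eq_Ioi zero_le_one]
  refine IntegrableOn.union ?_ ?_
  · refine Integrable.mono' (intervalIntegral.intervalIntegrable_rpow' hp).1 hmeas.restrict ?_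
    refine (ae_restrict_iff' measurableSet_Ioc).2 (Eventually.of_forall fun x hx => ?_)
    rw [Real.norm_of_nonneg (le_min (rpow_nonneg hx.1.le _) (rpow_nonneg hx.1.le _))]
    exact min_le_left _ _
  · refine Integrable.mono' (integrableOn_Ioi_rpow_of_lt hq zero_lt_one) hmeas.restrict ?_
    refine (ae_restrict_iff' measurableSet_Ioi).2 (Eventually.of_forall fun x hx => ?_)
    have hx : (0 : ℝ) < x := zero_lt_one.trans hx
    rw [Real.norm_of_nonneg (le_min (rpow_nonneg hx.le _) (rpow_nonneg hx.le _))]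
    exact min_le_right _ _

theorem norm_exp_neg_le_one {z : ℂ} (hz : 0 ≤ z.re) : ‖cexp (-z)‖ ≤ 1 := by
  rw [norm_exp, neg_re, Real.exp_le_one_iff]
  linarith

theorem norm_one_sub_exp_neg_le {z : ℂ} (hz : 0 ≤ z.re) :
    ‖1 - cexp (-z)‖ ≤ 2 * min ‖z‖ 1 := by
  rcases le_total ‖z‖ 1 with h | h
  · rw [min_eq_left h, norm_sub_rev, ← norm_neg z]
    exact norm_exp_sub_one_le (by rwa [norm_neg])
  · rw [min_eq_right h]
    linarith [norm_sub_le (1 : ℂ) (cexp (-z)), norm_one (α := ℂ), norm_exp_neg_le_one hz]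

theorem norm_exp_neg_sub_one_add_le {z : ℂ} (hz : 0 ≤ z.re) :
    ‖cexp (-z) - 1 + z‖ ≤ 3 * min (‖z‖ ^ 2) ‖z‖ := by
  rcases le_total ‖z‖ 1 with h | h
  · have := norm_exp_sub_one_sub_id_le (x := -z) (by rwa [norm_neg])
    rw [sub_neg_eq_add, norm_neg] at this
    rw [min_eq_left (by nlinarith [norm_nonneg z])]
    nlinarith [sq_nonneg ‖z‖]
  · rw [min_eq_right (by nlinarith)]
    have := norm_sub_le (cexp (-z) - 1) (-z)
    rw [sub_neg_eq_add, norm_neg] at this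
    linarith [norm_sub_le (cexp (-z)) 1, norm_one (α := ℂ), norm_exp_neg_le_one hz]

noncomputable section

def levyIntegrand (α : ℝ) (a : ℂ) (x : ℝ) : ℂ :=
  (cexp (-(a * x)) - 1 + a * x) * ↑(x ^ (-α - 1))

def levyIntegrandDeriv (α : ℝ) (a : ℂ) (x : ℝ) : ℂ :=
  (1 - cexp (-(a * x))) * ↑(x ^ (-α))

def levyTransform (α : ℝ) (a : ℂ) : ℂ := ∫ x in Ioi 0, levyIntegrand α a x

def levyTransformDeriv (α : ℝ) (a : ℂ) : ℂ := ∫ x in Ioi 0, levyIntegrandDeriv α a x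

end

variable {α : ℝ}

theorem integrableOn_min_rpow_one_sub_rpow_neg (hα1 : 1 < α) (hα2 : α < 2) :
    IntegrableOn (fun x : ℝ => min (x ^ (1 - α)) (x ^ (-α))) (Ioi 0) :=
  integrableOn_Ioi_min_rpow (by linarith) (by linarith)

section Bounds

variable {a : ℂ} {R x : ℝ}

theorem re_mul_ofReal_nonneg (ha : 0 ≤ a.re) (hx : 0 < x) : 0 ≤ (a * x).re := by
  rw [re_mul_ofReal]
  exact mul_nonneg ha hx.le

theorem norm_mul_ofReal_le (haR : ‖a‖ ≤ R) (hx : 0 < x) : ‖a * x‖ ≤ R * x := by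
  rw [norm_mul, norm_real, Real.norm_of_nonneg hx.le]
  exact mul_le_mul_of_nonneg_right haR hx.le

theorem norm_levyIntegrand_le (ha : 0 ≤ a.re) (haR : ‖a‖ ≤ R) (hR : 1 ≤ R) (hx : 0 < x) :
    ‖levyIntegrand α a x‖ ≤ 3 * R ^ 2 * min (x ^ (1 - α)) (x ^ (-α)) := by
  have hz := norm_mul_ofReal_le haR hx
  have hpow : 0 ≤ x ^ (-α - 1) := rpow_nonneg hx.le _
  have hmin : min (‖a * x‖ ^ 2) ‖a * x‖ ≤ R ^ 2 * min (x ^ 2) x :=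
    calc min (‖a * x‖ ^ 2) ‖a * x‖ ≤ min ((R * x) ^ 2) (R * x) := by
          gcongr
      _ ≤ min (R ^ 2 * x ^ 2) (R ^ 2 * x) := by
          gcongr
          · rw [mul_pow]
          · nlinarith
      _ = R ^ 2 * min (x ^ 2) x := (mul_min_of_nonneg _ _ (sq_nonneg R)).symm
  calc ‖levyIntegrand α a x‖ = ‖cexp (-(a * x)) - 1 + a * x‖ * x ^ (-α - 1) := by
        rw [levyIntegrand, norm_mul, norm_real, Real.norm_of_nonneg hpow]
    _ ≤ 3 * (R ^ 2 * min (x ^ 2) x) * x ^ (-α - 1) := by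
        gcongr
        exact (norm_exp_neg_sub_one_add_le (re_mul_ofReal_nonneg ha hx)).trans (by gcongr)
    _ = 3 * R ^ 2 * min (x ^ (1 - α)) (x ^ (-α)) := by
        rw [mul_assoc, mul_assoc, min_mul_of_nonneg _ _ hpow, mul_comm (x ^ 2), mul_comm x,
          ← rpow_add_natCast hx.ne', ← rpow_add_one hx.ne']
        ring_nf

theorem norm_levyIntegrandDeriv_le (ha : 0 ≤ a.re) (haR : ‖a‖ ≤ R) (hR : 1 ≤ R) (hx : 0 < x) :
    ‖levyIntegrandDeriv α a x‖ ≤ 2 * R * min (x ^ (1 - α)) (x ^ (-α)) := by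
  have hz := norm_mul_ofReal_le haR hx
  have hpow : 0 ≤ x ^ (-α) := rpow_nonneg hx.le _
  have hmin : min ‖a * x‖ 1 ≤ R * min x 1 :=
    calc min ‖a * x‖ 1 ≤ min (R * x) R := by gcongr
      _ = R * min x 1 := by rw [mul_min_of_nonneg _ _ (by linarith), mul_one]
  calc ‖levyIntegrandDeriv α a x‖ = ‖1 - cexp (-(a * x))‖ * x ^ (-α) := by
        rw [levyIntegrandDeriv, norm_mul, norm_real, Real.norm_of_nonneg hpow]
    _ ≤ 2 * (R * min x 1) * x ^ (-α) := by
        gcongr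
        exact (norm_one_sub_exp_neg_le (re_mul_ofReal_nonneg ha hx)).trans (by gcongr)
    _ = 2 * R * min (x ^ (1 - α)) (x ^ (-α)) := by
        rw [mul_assoc, mul_assoc, min_mul_of_nonneg _ _ hpow, one_mul, mul_comm x,
          ← rpow_add_one hx.ne']
        ring_nf

end Bounds

theorem continuous_levyIntegrand (α : ℝ) (x : ℝ) : Continuous fun a => levyIntegrand α a x := by
  unfold levyIntegrand
  fun_prop

theorem aestronglyMeasurable_levyIntegrand (α : ℝ) (a : ℂ) :
    AEStronglyMeasurable (levyIntegrand α a) (volume.restrict (Ioi 0)) := by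
  unfold levyIntegrand
  fun_prop

theorem aestronglyMeasurable_levyIntegrandDeriv (α : ℝ) (a : ℂ) :
    AEStronglyMeasurable (levyIntegrandDeriv α a) (volume.restrict (Ioi 0)) := by
  unfold levyIntegrandDeriv
  fun_prop

theorem integrableOn_levyIntegrand (hα1 : 1 < α) (hα2 : α < 2) {a : ℂ} (ha : 0 ≤ a.re) :
    IntegrableOn (levyIntegrand α a) (Ioi 0) := by
  refine ((integrableOn_min_rpow_one_sub_rpow_neg hα1 hα2).const_mul (3 * (‖a‖ + 1) ^ 2)).mono'
    (aestronglyMeasurable_levyIntegrand α a) ?_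
  refine (ae_restrict_iff' measurableSet_Ioi).2 (Eventually.of_forall fun x hx => ?_)
  exact norm_levyIntegrand_le ha (by linarith) (by linarith [norm_nonneg a]) hx

theorem integrableOn_levyIntegrandDeriv (hα1 : 1 < α) (hα2 : α < 2) {a : ℂ} (ha : 0 ≤ a.re) :
    IntegrableOn (levyIntegrandDeriv α a) (Ioi 0) := by
  refine ((integrableOn_min_rpow_one_sub_rpow_neg hα1 hα2).const_mul (2 * (‖a‖ + 1))).mono'
    (aestronglyMeasurable_levyIntegrandDeriv α a) ?_
  refine (ae_restrict_iff' measurableSet_Ioi).2 (Eventually.of_forall fun x hx => ?_)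
  exact norm_levyIntegrandDeriv_le ha (by linarith) (by linarith [norm_nonneg a]) hx

theorem hasDerivAt_neg_mul_ofReal (a : ℂ) (x : ℝ) : HasDerivAt (fun b : ℂ => -(b * x)) (-x) a := by
  simpa using (hasDerivAt_id a).mul_const (-(x : ℂ))

theorem hasDerivAt_levyIntegrand (α : ℝ) (a : ℂ) {x : ℝ} (hx : 0 < x) :
    HasDerivAt (fun b => levyIntegrand α b x) (levyIntegrandDeriv α a x) a := by
  refine (((((hasDerivAt_neg_mul_ofReal a x).cexp).sub_const 1).add
    ((hasDerivAt_id a).mul_const (x : ℂ))).mul_const _).congr_deriv ?_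
  have hpow : x ^ (-α) = x ^ (-α - 1) * x := by rw [← rpow_add_one hx.ne', sub_add_cancel]
  rw [levyIntegrandDeriv, hpow]
  push_cast
  ring

theorem hasDerivAt_levyIntegrandDeriv (α : ℝ) (a : ℂ) {x : ℝ} (hx : 0 < x) :
    HasDerivAt (fun b => levyIntegrandDeriv α b x)
      (cexp (-(a * x)) * ↑(x ^ (1 - α))) a := by
  refine ((((hasDerivAt_neg_mul_ofReal a x).cexp).const_sub 1).mul_const _).congr_deriv ?_
  rw [show 1 - α = -α + 1 by ring, rpow_add_one hx.ne']
  push_cast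
  ring

theorem hasDerivAt_levyTransform (hα1 : 1 < α) (hα2 : α < 2) {a : ℂ} (ha : 0 < a.re) :
    HasDerivAt (levyTransform α) (levyTransformDeriv α a) a := by
  have hs : {b : ℂ | 0 < b.re} ∩ Metric.ball 0 (‖a‖ + 1) ∈ 𝓝 a :=
    ((isOpen_lt continuous_const continuous_re).inter Metric.isOpen_ball).mem_nhds
      ⟨ha, by simp⟩
  refine (hasDerivAt_integral_of_dominated_loc_of_deriv_le hs
    (Eventually.of_forall (aestronglyMeasurable_levyIntegrand α))
    (integrableOn_levyIntegrand hα1 hα2 ha.le) (aestronglyMeasurable_levyIntegrandDeriv α a)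
    (bound := fun x => 2 * (‖a‖ + 1) * min (x ^ (1 - α)) (x ^ (-α))) ?_
    ((integrableOn_min_rpow_one_sub_rpow_neg hα1 hα2).const_mul _) ?_).2
  all_goals refine (ae_restrict_iff' measurableSet_Ioi).2 (Eventually.of_forall fun x hx b hb => ?_)
  · have hb' : ‖b‖ < ‖a‖ + 1 := by simpa using hb.2
    exact norm_levyIntegrandDeriv_le (le_of_lt hb.1) hb'.le (by linarith [norm_nonneg a]) hx
  · exact hasDerivAt_levyIntegrand α b hx

theorem hasDerivAt_levyTransformDeriv (hα1 : 1 < α) (hα2 : α < 2) {a : ℂ} (ha : 0 < a.re) :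
    HasDerivAt (levyTransformDeriv α)
      (∫ x in Ioi (0 : ℝ), cexp (-(a * x)) * ↑(x ^ (1 - α))) a := by
  have hs : {b : ℂ | a.re / 2 < b.re} ∈ 𝓝 a :=
    (isOpen_lt continuous_const continuous_re).mem_nhds (by simp; linarith)
  have hbound : IntegrableOn (fun x : ℝ => x ^ (1 - α) * rexp (-(a.re / 2 * x))) (Ioi 0) := by
    simpa using integrableOn_rpow_mul_exp_neg_mul_rpow (p := 1) (by linarith) one_pos (half_pos ha)
  refine (hasDerivAt_integral_of_dominated_loc_of_deriv_le hs
    (Eventually.of_forall (aestronglyMeasurable_levyIntegrandDeriv α))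
    (integrableOn_levyIntegrandDeriv hα1 hα2 ha.le)
    (F' := fun b (x : ℝ) => cexp (-(b * x)) * ↑(x ^ (1 - α))) (by fun_prop) ?_ hbound ?_).2
  all_goals refine (ae_restrict_iff' measurableSet_Ioi).2 (Eventually.of_forall fun x hx b hb => ?_)
  · rw [norm_mul, norm_real, Real.norm_of_nonneg (rpow_nonneg hx.le _), mul_comm, norm_exp]
    gcongr
    · exact rpow_nonneg (le_of_lt hx) _
    · rw [neg_re, re_mul_ofReal, neg_le_neg_iff]
      exact mul_le_mul_of_nonneg_right hb.le (le_of_lt hx)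
  · exact hasDerivAt_levyIntegrandDeriv α b hx

theorem levyTransform_ofReal_mul (α : ℝ) {r : ℝ} (hr : 0 < r) (a : ℂ) :
    levyTransform α (r * a) = ↑(r ^ α) * levyTransform α a := by
  have hscale : ∀ x ∈ Ioi (0 : ℝ),
      levyIntegrand α (r * a) x = ↑(r ^ (α + 1)) * levyIntegrand α a (r * x) := by
    intro x hx
    have hpow : x ^ (-α - 1) = r ^ (α + 1) * (r * x) ^ (-α - 1) := by
      rw [mul_rpow hr.le (le_of_lt hx), ← mul_assoc, ← rpow_add hr,
        show α + 1 + (-α - 1) = 0 by ring, rpow_zero, one_mul]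
    have harg : (r * a : ℂ) * x = a * ↑(r * x) := by push_cast; ring
    rw [levyIntegrand, levyIntegrand, harg, hpow]
    push_cast
    ring
  rw [levyTransform, setIntegral_congr_fun measurableSet_Ioi hscale, integral_const_mul,
    integral_comp_mul_left_Ioi (levyIntegrand α a) 0 hr, mul_zero, ← levyTransform, real_smul,
    ← mul_assoc, ← ofReal_mul, rpow_add_one hr.ne', mul_assoc, mul_inv_cancel₀ hr.ne', mul_one]

theorem levyTransformDeriv_ofReal (hα1 : 1 < α) (hα2 : α < 2) {r : ℝ} (hr : 0 < r) :
    levyTransformDeriv α r = ↑(α * r ^ (α - 1)) * levyTransform α 1 := by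
  have hΦ : HasDerivAt (fun s : ℝ => levyTransform α s) (levyTransformDeriv α r) r :=
    (hasDerivAt_levyTransform hα1 hα2 (by simpa using hr)).comp_ofReal
  have hscale : (fun s : ℝ => ↑(s ^ α) * levyTransform α 1) =ᶠ[𝓝 r]
      fun s : ℝ => levyTransform α s := by
    filter_upwards [Ioi_mem_nhds hr] with s hs
    simpa using (levyTransform_ofReal_mul α hs 1).symm
  exact hΦ.unique (((hasDerivAt_rpow_const (Or.inl hr.ne')).ofReal_comp.mul_const _
    ).congr_of_eventuallyEq hscale.symm)

theorem integral_cexp_neg_mul_rpow_one_sub (hα2 : α < 2) :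
    ∫ x in Ioi (0 : ℝ), cexp (-((1 : ℝ) * x)) * ↑(x ^ (1 - α)) = ↑(Real.Gamma (2 - α)) := by
  rw [Real.Gamma_eq_integral (by linarith), ← integral_complex_ofReal]
  refine setIntegral_congr_fun measurableSet_Ioi fun x _ => ?_
  push_cast
  ring_nf

theorem levyTransform_one (hα1 : 1 < α) (hα2 : α < 2) :
    levyTransform α 1 = ↑(Real.Gamma (2 - α) / (α * (α - 1))) := by
  have hΦ' : HasDerivAt (fun s : ℝ => levyTransformDeriv α s) (↑(Real.Gamma (2 - α))) 1 := by
    rw [← integral_cexp_neg_mul_rpow_one_sub hα2]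
    exact (hasDerivAt_levyTransformDeriv hα1 hα2 (by simp)).comp_ofReal
  have hscale : (fun s : ℝ => ↑(α * s ^ (α - 1)) * levyTransform α 1) =ᶠ[𝓝 1]
      fun s : ℝ => levyTransformDeriv α s := by
    filter_upwards [Ioi_mem_nhds one_pos] with s hs
    exact (levyTransformDeriv_ofReal hα1 hα2 hs).symm
  have hderiv := hΦ'.unique ((((hasDerivAt_rpow_const (Or.inl one_ne_zero)).const_mul
    α).ofReal_comp.mul_const _).congr_of_eventuallyEq hscale.symm)
  have hα : ((α * (α - 1) : ℝ) : ℂ) ≠ 0 := ofReal_ne_zero.2 (by nlinarith)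
  rw [ofReal_div, eq_div_iff hα, hderiv, one_rpow, mul_one]
  push_cast
  ring

theorem levyTransform_eq_of_re_pos (hα1 : 1 < α) (hα2 : α < 2) {a : ℂ} (ha : 0 < a.re) :
    levyTransform α a = ↑(Real.Gamma (2 - α) / (α * (α - 1))) * a ^ (α : ℂ) := by
  have hU : IsOpen {z : ℂ | 0 < z.re} := isOpen_lt continuous_const continuous_re
  have hΦ : AnalyticOnNhd ℂ (levyTransform α) {z : ℂ | 0 < z.re} :=
    DifferentiableOn.analyticOnNhd (fun z hz =>
      (hasDerivAt_levyTransform hα1 hα2 hz).differentiableAt.differentiableWithinAt) hU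
  have hpow : AnalyticOnNhd ℂ (fun z : ℂ => ↑(Real.Gamma (2 - α) / (α * (α - 1))) * z ^ (α : ℂ))
      {z : ℂ | 0 < z.re} :=
    DifferentiableOn.analyticOnNhd (fun z hz =>
      ((differentiableAt_id.cpow_const (Or.inl hz)).const_mul _).differentiableWithinAt) hU
  have hreal : ∀ᶠ r : ℝ in 𝓝[≠] 1,
      levyTransform α r = ↑(Real.Gamma (2 - α) / (α * (α - 1))) * (r : ℂ) ^ (α : ℂ) := by
    filter_upwards [nhdsWithin_le_nhds (Ioi_mem_nhds one_pos)] with r hr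
    rw [← mul_one (r : ℂ), levyTransform_ofReal_mul α hr, levyTransform_one hα1 hα2, mul_one,
      ofReal_cpow (le_of_lt hr), mul_comm]
  have hofReal : Tendsto ((↑) : ℝ → ℂ) (𝓝[≠] 1) (𝓝[≠] 1) :=
    tendsto_nhdsWithin_of_tendsto_nhds_of_eventually_within _
      (continuous_ofReal.tendsto' 1 1 ofReal_one |>.mono_left nhdsWithin_le_nhds)
      (eventually_nhdsWithin_of_forall fun r hr => by simpa using hr)
  exact hΦ.eqOn_of_preconnected_of_frequently_eq hpow
    (convex_halfSpace_re_gt 0).isPreconnected (by simp) (hofReal.frequently hreal.frequently) ha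

theorem continuousWithinAt_levyTransform (hα1 : 1 < α) (hα2 : α < 2) {a : ℂ} :
    ContinuousWithinAt (levyTransform α) {z : ℂ | 0 ≤ z.re} a := by
  have hbound : ∀ᶠ b in 𝓝[{z : ℂ | 0 ≤ z.re}] a, ∀ᵐ x ∂(volume.restrict (Ioi 0)),
      ‖levyIntegrand α b x‖ ≤ 3 * (‖a‖ + 1) ^ 2 * min (x ^ (1 - α)) (x ^ (-α)) := by
    filter_upwards [self_mem_nhdsWithin, nhdsWithin_le_nhds
      ((continuous_norm.tendsto a).eventually (gt_mem_nhds (lt_add_one ‖a‖)))] with b hb hba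
    refine (ae_restrict_iff' measurableSet_Ioi).2 (Eventually.of_forall fun x hx => ?_)
    exact norm_levyIntegrand_le hb hba.le (by linarith [norm_nonneg a]) hx
  exact continuousWithinAt_of_dominated
    (Eventually.of_forall (aestronglyMeasurable_levyIntegrand α)) hbound
    ((integrableOn_min_rpow_one_sub_rpow_neg hα1 hα2).const_mul _)
    (Eventually.of_forall fun x => (continuous_levyIntegrand α x).continuousWithinAt)

theorem levyTransform_eq (hα1 : 1 < α) (hα2 : α < 2) {a : ℂ} (ha : 0 ≤ a.re) :
    levyTransform α a = ↑(Real.Gamma (2 - α) / (α * (α - 1))) * a ^ (α : ℂ) := by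
  have hpow : ContinuousAt (fun z : ℂ => ↑(Real.Gamma (2 - α) / (α * (α - 1))) * z ^ (α : ℂ)) a :=
    (continuousAt_cpow_const_of_re_pos (Or.inl ha) (by simp; linarith)).const_mul _
  have hne : (𝓝[{z : ℂ | 0 < z.re}] a).NeBot :=
    mem_closure_iff_nhdsWithin_neBot.1 (by simpa using ha)
  have hsub : {z : ℂ | 0 < z.re} ⊆ {z : ℂ | 0 ≤ z.re} := fun z (hz : 0 < z.re) => hz.le
  exact tendsto_nhds_unique ((continuousWithinAt_levyTransform hα1 hα2).mono hsub)
    ((hpow.tendsto.mono_left nhdsWithin_le_nhds).congr'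
      (eventually_nhdsWithin_of_forall fun z hz => (levyTransform_eq_of_re_pos hα1 hα2 hz).symm))

theorem ofReal_mul_exp_mul_I_cpow {r θ : ℝ} (hr : 0 < r) (h₁ : -π < θ) (h₂ : θ ≤ π) (p : ℝ) :
    (r * cexp (θ * I)) ^ (p : ℂ) = ↑(r ^ p) * cexp (↑(p * θ) * I) := by
  rw [cpow_def_of_ne_zero (mul_ne_zero (ofReal_ne_zero.2 hr.ne') (exp_ne_zero _)),
    log_ofReal_mul hr (exp_ne_zero _), log_exp (by simpa) (by simpa), add_mul, Complex.exp_add,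
    ofReal_cpow hr.le, cpow_def_of_ne_zero (ofReal_ne_zero.2 hr.ne'), ofReal_log hr.le]
  push_cast
  ring_nf

theorem neg_I_mul_ofReal_cpow {t : ℝ} (ht : t ≠ 0) (p : ℝ) :
    (-(I * t)) ^ (p : ℂ) =
      ↑(|t| ^ p) * (Real.cos (π * p / 2) - I * Real.sin (π * p / 2) * Real.sign t) := by
  rcases ht.lt_or_gt with ht | ht
  · have hpolar : -(I * t) = ↑(-t) * cexp (↑(π / 2) * I) := by
      rw [ofReal_div, ofReal_ofNat, exp_pi_div_two_mul_I]
      push_cast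
      ring
    rw [hpolar, ofReal_mul_exp_mul_I_cpow (neg_pos.2 ht) (by linarith [pi_pos])
      (by linarith [pi_pos]), abs_of_neg ht, Real.sign_of_neg ht, exp_mul_I, ← ofReal_cos,
      ← ofReal_sin]
    push_cast
    ring_nf
  · have hpolar : -(I * t) = ↑t * cexp (↑(-(π / 2)) * I) := by
      rw [ofReal_neg, ofReal_div, ofReal_ofNat, neg_div', exp_neg_pi_div_two_mul_I]
      ring
    rw [hpolar, ofReal_mul_exp_mul_I_cpow ht (by linarith [pi_pos]) (by linarith [pi_pos]),
      abs_of_pos ht, Real.sign_of_pos ht, exp_mul_I, ← ofReal_cos, ← ofReal_sin]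
    push_cast
    rw [show (p : ℂ) * -(π / 2) = -(π * p / 2) by ring, Complex.cos_neg, Complex.sin_neg]
    ring

theorem stmt17 (α : ℝ) (hα1 : 1 < α) (hα2 : α < 2) (t : ℝ) (ht : t ≠ 0) :
    IntegrableOn (fun x : ℝ =>
        (Complex.exp (Complex.I * t * x) - 1 - Complex.I * t * x) * (↑(x ^ (-α - 1)) : ℂ))
      (Set.Ioi 0) volume ∧
    ∫ x in Set.Ioi (0 : ℝ),
        (Complex.exp (Complex.I * t * x) - 1 - Complex.I * t * x) * (↑(x ^ (-α - 1)) : ℂ) =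
      (↑(Real.Gamma (2 - α) / (α * (α - 1)) * |t| ^ α) : ℂ) *
        (Real.cos (π * α / 2) - Complex.I * Real.sin (π * α / 2) * Real.sign t) := by
  have hre : 0 ≤ (-(I * t)).re := by simp
  have hintegrand : (fun x : ℝ =>
      (cexp (I * t * x) - 1 - I * t * x) * (↑(x ^ (-α - 1)) : ℂ)) =
      levyIntegrand α (-(I * t)) := by
    ext x
    simp only [levyIntegrand, neg_mul, neg_neg]
    ring_nf
  rw [hintegrand]
  refine ⟨integrableOn_levyIntegrand hα1 hα2 hre, ?_⟩
  rw [← levyTransform, levyTransform_eq hα1 hα2 hre, neg_I_mul_ofReal_cpow ht, ofReal_mul]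
  ring
end
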